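/- arXiv:2603.02416 — 6 statements merged into one kernel-verified Lean document; each statement's English description precedes it below -/
import Mathlib

section
/- Fix a real κ > 0, and for each positive integer T set Q(T) = 2T(T+1). Then the limit as T → ∞ of (1/Q(T)^{3/2})·∑_{i=1}^{T} 4i·√(κ²·Q(T) + 16π²i²) equals ((κ² + 8π²)^{3/2} − κ³)/(12π²). -/
open Real Filter

noncomputable def ff (κ u : ℝ) : ℝ := Real.sqrt (κ ^ 2 + 8 * π ^ 2 * u)

noncomputable def gg (κ u : ℝ) : ℝ := (κ ^ 2 + 8 * π ^ 2 * u) ^ ((3:ℝ)/2) / (12 * π ^ 2)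

lemma hasDerivAt_gg (κ x : ℝ) (hx : 0 ≤ x) : HasDerivAt (gg κ) (ff κ x) x := by
  have h1 : HasDerivAt (fun u : ℝ => κ ^ 2 + 8 * π ^ 2 * u) (8 * π ^ 2) x := by
    simpa using ((hasDerivAt_id x).const_mul (8 * π ^ 2)).const_add (κ ^ 2)
  have h2 : HasDerivAt (fun y : ℝ => y ^ ((3:ℝ)/2))
      ((3:ℝ)/2 * (κ ^ 2 + 8 * π ^ 2 * x) ^ ((3:ℝ)/2 - 1)) (κ ^ 2 + 8 * π ^ 2 * x) :=
    Real.hasDerivAt_rpow_const (Or.inr (by norm_num))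
  have h3 := (h2.comp x h1).div_const (12 * π ^ 2)
  refine h3.congr_deriv ?_
  symm
  have hb : (0:ℝ) ≤ κ ^ 2 + 8 * π ^ 2 * x := by positivity
  have h32 : (3:ℝ)/2 - 1 = 1/2 := by norm_num
  rw [ff, Real.sqrt_eq_rpow, h32]
  have hpi := Real.pi_ne_zero
  field_simp
  ring

lemma ff_mono (κ : ℝ) {a b : ℝ} (hab : a ≤ b) : ff κ a ≤ ff κ b := by
  apply Real.sqrt_le_sqrt
  nlinarith [Real.pi_pos, sq_nonneg π]

lemma ff_nonneg (κ a : ℝ) : 0 ≤ ff κ a := Real.sqrt_nonneg _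

lemma gg_sub_bounds (κ : ℝ) {a b : ℝ} (ha : 0 ≤ a) (hab : a ≤ b) :
    (b - a) * ff κ a ≤ gg κ b - gg κ a ∧ gg κ b - gg κ a ≤ (b - a) * ff κ b := by
  rcases eq_or_lt_of_le hab with rfl | hlt
  · simp
  have hcont : ContinuousOn (gg κ) (Set.Icc a b) := fun x hx =>
    (hasDerivAt_gg κ x (ha.trans hx.1)).continuousAt.continuousWithinAt
  have hderiv : ∀ x ∈ Set.Ioo a b, HasDerivAt (gg κ) (ff κ x) x := fun x hx =>
    hasDerivAt_gg κ x (ha.trans hx.1.le)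
  obtain ⟨c, hc, hceq⟩ := exists_hasDerivAt_eq_slope (gg κ) (ff κ) hlt hcont hderiv
  have hba : (0:ℝ) < b - a := by linarith
  have key : gg κ b - gg κ a = (b - a) * ff κ c := by
    field_simp at hceq; linarith [hceq]
  constructor
  · rw [key]
    exact mul_le_mul_of_nonneg_left (ff_mono κ hc.1.le) hba.le
  · rw [key]
    exact mul_le_mul_of_nonneg_left (ff_mono κ hc.2.le) hba.le

lemma gg_zero (κ : ℝ) (hκ : 0 ≤ κ) : gg κ 0 = κ ^ 3 / (12 * π ^ 2) := by
  unfold gg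
  rw [mul_zero, add_zero]
  congr 1
  rw [← Real.rpow_natCast κ 2, ← Real.rpow_mul hκ]
  norm_num

lemma term_eq (κ : ℝ) {N : ℝ} (hN : 0 < N) (x : ℝ) :
    (1 / (2*N) ^ ((3:ℝ)/2)) * (4 * x * Real.sqrt (κ^2 * (2*N) + 16*π^2*x^2))
      = (2*x/N) * ff κ (x^2/N) := by
  have hQ : (0:ℝ) < 2*N := by linarith
  have h1 : κ^2*(2*N) + 16*π^2*x^2 = (2*N) * (κ^2 + 8*π^2*(x^2/N)) := by
    field_simp; ring
  have h2 : (2*N) ^ ((3:ℝ)/2) = (2*N) * Real.sqrt (2*N) := by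
    rw [Real.sqrt_eq_rpow, show (3:ℝ)/2 = 1 + 1/2 by norm_num, Real.rpow_add hQ, Real.rpow_one]
  have hs : (0:ℝ) < Real.sqrt (2*N) := Real.sqrt_pos.mpr hQ
  rw [h1, Real.sqrt_mul hQ.le, h2, ff]
  field_simp
  ring

set_option maxHeartbeats 2000000 in
lemma main_bounds (κ : ℝ) (hκ : κ > 0) (T : ℕ) (hT : 1 ≤ T) :
    (gg κ 1 - gg κ 0) - ff κ 1 / ((T:ℝ) + 1) ≤
      (1 / ((2 * T * (T + 1) : ℝ)) ^ ((3:ℝ)/2)) *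
        ∑ i ∈ Finset.Icc 1 T,
          4 * (i : ℝ) * Real.sqrt (κ ^ 2 * (2 * T * (T + 1) : ℝ) + 16 * π ^ 2 * (i : ℝ) ^ 2) ∧
    (1 / ((2 * T * (T + 1) : ℝ)) ^ ((3:ℝ)/2)) *
        ∑ i ∈ Finset.Icc 1 T,
          4 * (i : ℝ) * Real.sqrt (κ ^ 2 * (2 * T * (T + 1) : ℝ) + 16 * π ^ 2 * (i : ℝ) ^ 2)
      ≤ (gg κ 1 - gg κ 0) + 3 * ff κ 1 / ((T:ℝ) + 1) := by
  obtain ⟨Tr, hTrdef⟩ : ∃ x : ℝ, x = (T : ℝ) := ⟨_, rfl⟩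
  have hTr : 1 ≤ Tr := by rw [hTrdef]; exact_mod_cast hT
  obtain ⟨N, hNdef⟩ : ∃ x : ℝ, x = Tr * (Tr + 1) := ⟨_, rfl⟩
  have hN : 0 < N := by rw [hNdef]; nlinarith
  obtain ⟨G, hGdef⟩ : ∃ G : ℕ → ℝ, G = fun j : ℕ => gg κ ((j:ℝ)^2 / N) := ⟨_, rfl⟩
  obtain ⟨F, hFdef⟩ : ∃ F : ℕ → ℝ, F = fun j : ℕ => ff κ ((j:ℝ)^2 / N) := ⟨_, rfl⟩
  obtain ⟨B, hBdef⟩ : ∃ x : ℝ, x = ff κ 1 := ⟨_, rfl⟩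
  have hTr0 : Tr ≠ 0 := by linarith
  have hTr1 : Tr + 1 ≠ 0 := by linarith
  -- rewrite the sum
  have hsum :
      (1 / ((2 * T * (T + 1) : ℝ)) ^ ((3:ℝ)/2)) *
        ∑ i ∈ Finset.Icc 1 T,
          4 * (i : ℝ) * Real.sqrt (κ ^ 2 * (2 * T * (T + 1) : ℝ) + 16 * π ^ 2 * (i : ℝ) ^ 2)
      = ∑ j ∈ Finset.range T, (2 * ((j:ℝ)+1) / N) * ff κ (((j:ℝ)+1)^2 / N) := by
    have hQ : (2 * T * (T + 1) : ℝ) = 2 * N := by rw [hNdef, hTrdef]; push_cast; ring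
    rw [hQ, Finset.mul_sum, ← Finset.Ico_add_one_right_eq_Icc, Finset.sum_Ico_eq_sum_range]
    simp only [Nat.add_sub_cancel, Nat.succ_sub_one]
    refine Finset.sum_congr rfl fun j _ => ?_
    have := term_eq κ hN ((1 + j : ℕ) : ℝ)
    push_cast at this ⊢
    convert this using 3 <;> ring
  rw [hsum]
  -- per-term facts
  have hterm : ∀ j ∈ Finset.range T,
      (G (j+1) - G j ≤ (2 * ((j:ℝ)+1) / N) * ff κ (((j:ℝ)+1)^2 / N)) ∧
      ((2 * ((j:ℝ)+1) / N) * ff κ (((j:ℝ)+1)^2 / N)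
        ≤ (G (j+1) - G j) + B / N + 2 / (Tr + 1) * (F (j+1) - F j)) := by
    intro j hj
    have hjT : (j:ℝ) + 1 ≤ Tr := by
      rw [hTrdef]
      have := Finset.mem_range.mp hj
      exact_mod_cast Nat.succ_le_of_lt this
    obtain ⟨a, hadef⟩ : ∃ x : ℝ, x = (j:ℝ)^2 / N := ⟨_, rfl⟩
    obtain ⟨b, hbdef⟩ : ∃ x : ℝ, x = ((j:ℝ)+1)^2 / N := ⟨_, rfl⟩
    have hj0 : (0:ℝ) ≤ (j:ℝ) := Nat.cast_nonneg j
    have ha : 0 ≤ a := by rw [hadef]; positivity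
    have hab : a ≤ b := by
      rw [hadef, hbdef, div_le_div_iff_of_pos_right hN]
      nlinarith
    have hba : b - a = (2*(j:ℝ)+1) / N := by
      rw [hadef, hbdef]
      field_simp
      ring
    obtain ⟨hlow, hhigh⟩ := gg_sub_bounds κ ha hab
    have hGj : G (j+1) - G j = gg κ b - gg κ a := by
      rw [hGdef, hadef, hbdef]
      push_cast
      ring_nf
    have hFj : F (j+1) - F j = ff κ b - ff κ a := by
      rw [hFdef, hadef, hbdef]
      push_cast
      ring_nf
    have hffb : 0 ≤ ff κ b := ff_nonneg κ b
    have hffab : ff κ a ≤ ff κ b := ff_mono κ hab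
    have hb1 : b ≤ 1 := by
      rw [hbdef, div_le_one hN, hNdef]
      nlinarith
    have hffB : ff κ b ≤ B := by rw [hBdef]; exact ff_mono κ hb1
    rw [← hbdef]
    constructor
    · rw [hGj]
      calc gg κ b - gg κ a ≤ (b - a) * ff κ b := hhigh
        _ ≤ (2 * ((j:ℝ)+1) / N) * ff κ b := by
            apply mul_le_mul_of_nonneg_right _ hffb
            rw [hba, div_le_div_iff_of_pos_right hN]
            linarith
    · rw [hGj, hFj]
      have hA : (2*(j:ℝ)+1)/N * ff κ a ≤ gg κ b - gg κ a := by
        rw [← hba]; exact hlow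
      have hfrac : (2*(j:ℝ)+1)/N ≤ 2 / (Tr + 1) := by
        rw [hNdef, div_le_div_iff₀ (by nlinarith) (by linarith)]
        nlinarith
      have hB2 : (2*(j:ℝ)+1)/N * (ff κ b - ff κ a) ≤ 2 / (Tr + 1) * (ff κ b - ff κ a) :=
        mul_le_mul_of_nonneg_right hfrac (by linarith)
      have hC : 1/N * ff κ b ≤ B / N := by
        rw [div_eq_mul_one_div B N]
        calc 1/N * ff κ b = ff κ b * (1/N) := by ring
          _ ≤ B * (1/N) := mul_le_mul_of_nonneg_right hffB (by positivity)
      have hid : (2 * ((j:ℝ)+1) / N) * ff κ b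
          = (2*(j:ℝ)+1)/N * ff κ a + (2*(j:ℝ)+1)/N * (ff κ b - ff κ a) + 1/N * ff κ b := by
        ring
      linarith
  -- sum the bounds
  have hlowsum : G T - G 0 ≤ ∑ j ∈ Finset.range T, (2 * ((j:ℝ)+1) / N) * ff κ (((j:ℝ)+1)^2 / N) := by
    rw [← Finset.sum_range_sub G T]
    exact Finset.sum_le_sum fun j hj => (hterm j hj).1
  have hhighsum : ∑ j ∈ Finset.range T, (2 * ((j:ℝ)+1) / N) * ff κ (((j:ℝ)+1)^2 / N)
      ≤ (G T - G 0) + Tr * (B / N) + 2 / (Tr + 1) * (F T - F 0) := by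
    calc ∑ j ∈ Finset.range T, (2 * ((j:ℝ)+1) / N) * ff κ (((j:ℝ)+1)^2 / N)
        ≤ ∑ j ∈ Finset.range T, ((G (j+1) - G j) + B / N + 2 / (Tr + 1) * (F (j+1) - F j)) :=
          Finset.sum_le_sum fun j hj => (hterm j hj).2
      _ = (G T - G 0) + Tr * (B / N) + 2 / (Tr + 1) * (F T - F 0) := by
          rw [Finset.sum_add_distrib, Finset.sum_add_distrib, Finset.sum_range_sub G,
            ← Finset.mul_sum, Finset.sum_range_sub F, Finset.sum_const, Finset.card_range]
          rw [hTrdef]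
          push_cast
          ring
  -- endpoint estimates
  have huT : (0:ℝ) ≤ Tr^2 / N := by
    apply div_nonneg (by positivity) hN.le
  have huT1 : Tr^2 / N ≤ 1 := by
    rw [div_le_one hN, hNdef, sq]
    exact mul_le_mul_of_nonneg_left (by linarith) (by linarith)
  have hgap : (1 : ℝ) - Tr^2 / N = 1 / (Tr + 1) := by
    have h1 : Tr^2 / N = Tr / (Tr + 1) := by
      rw [hNdef, sq, mul_div_mul_left Tr (Tr+1) hTr0]
    rw [h1, eq_div_iff hTr1, sub_mul, div_mul_cancel₀ Tr hTr1]
    ring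
  obtain ⟨hend1, hend2⟩ := gg_sub_bounds κ huT huT1
  have hGT : G T = gg κ (Tr^2 / N) := by rw [hGdef, hTrdef]
  have hFT : F T = ff κ (Tr^2 / N) := by rw [hFdef, hTrdef]
  have hG0 : G 0 = gg κ 0 := by rw [hGdef]; norm_num
  have hF0 : F 0 = ff κ 0 := by rw [hFdef]; norm_num
  have hGTup : gg κ (Tr^2 / N) ≤ gg κ 1 := by
    have hnn : 0 ≤ (1 - Tr^2/N) * ff κ (Tr^2/N) := mul_nonneg (by linarith) (ff_nonneg κ _)
    linarith [hend1]
  have hGTlow : gg κ 1 - B / (Tr + 1) ≤ gg κ (Tr^2 / N) := by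
    have h1 : gg κ 1 - gg κ (Tr^2/N) ≤ (1 - Tr^2/N) * ff κ 1 := hend2
    rw [hgap] at h1
    have h2 : (1 / (Tr+1)) * ff κ 1 = B / (Tr + 1) := by rw [hBdef]; ring
    linarith
  have hFTB : F T - F 0 ≤ B := by
    rw [hFT, hF0, hBdef]
    have h1 := ff_mono κ huT1
    have h2 := ff_nonneg κ (0:ℝ)
    linarith
  have hTrN : Tr * (B / N) = B / (Tr + 1) := by
    rw [← mul_div_assoc, hNdef, mul_div_mul_left B (Tr+1) hTr0]
  have hTcast : ((T:ℝ) + 1) = Tr + 1 := by rw [hTrdef]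
  rw [hTcast, ← hBdef]
  constructor
  · calc (gg κ 1 - gg κ 0) - B / (Tr + 1) ≤ gg κ (Tr^2/N) - gg κ 0 := by linarith
      _ = G T - G 0 := by rw [hGT, hG0]
      _ ≤ _ := hlowsum
  · have hBpos : 0 ≤ B := by rw [hBdef]; exact ff_nonneg κ 1
    have h1T : (0:ℝ) < Tr + 1 := by linarith
    have hfrac2 : 2 / (Tr + 1) * (F T - F 0) ≤ 2 * B / (Tr + 1) := by
      calc 2 / (Tr + 1) * (F T - F 0) ≤ 2 / (Tr+1) * B :=
            mul_le_mul_of_nonneg_left hFTB (by positivity)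
        _ = 2 * B / (Tr + 1) := by ring
    calc ∑ j ∈ Finset.range T, (2 * ((j:ℝ)+1) / N) * ff κ (((j:ℝ)+1)^2 / N)
        ≤ (G T - G 0) + Tr * (B / N) + 2 / (Tr + 1) * (F T - F 0) := hhighsum
      _ ≤ (gg κ 1 - gg κ 0) + B / (Tr + 1) + 2 * B / (Tr + 1) := by
          rw [hGT, hG0, hTrN]; linarith
      _ = (gg κ 1 - gg κ 0) + 3 * B / (Tr + 1) := by ring

theorem shell_sum_limit (κ : ℝ) (hκ : κ > 0) :
    Tendsto
      (fun T : ℕ =>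
        (1 / ((2 * T * (T + 1) : ℝ)) ^ ((3:ℝ)/2)) *
          ∑ i ∈ Finset.Icc 1 T,
            4 * (i : ℝ) * Real.sqrt (κ ^ 2 * (2 * T * (T + 1) : ℝ) + 16 * Real.pi ^ 2 * (i : ℝ) ^ 2))
      atTop
      (nhds (((κ ^ 2 + 8 * Real.pi ^ 2) ^ ((3:ℝ)/2) - κ ^ 3) / (12 * Real.pi ^ 2))) := by
  have hL : ((κ ^ 2 + 8 * Real.pi ^ 2) ^ ((3:ℝ)/2) - κ ^ 3) / (12 * Real.pi ^ 2)
      = gg κ 1 - gg κ 0 := by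
    rw [gg_zero κ hκ.le, gg]
    rw [mul_one]
    ring
  rw [hL]
  set B : ℝ := ff κ 1 with hBdef
  have h0 : Tendsto (fun T : ℕ => B / ((T:ℝ) + 1)) atTop (nhds 0) := by
    have := tendsto_one_div_add_atTop_nhds_zero_nat.const_mul B
    simpa [div_eq_mul_inv, mul_comm, mul_assoc, mul_left_comm, one_div] using this
  apply tendsto_of_tendsto_of_tendsto_of_le_of_le'
    (g := fun T : ℕ => (gg κ 1 - gg κ 0) - B / ((T:ℝ) + 1))
    (h := fun T : ℕ => (gg κ 1 - gg κ 0) + 3 * B / ((T:ℝ) + 1))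
  · simpa using tendsto_const_nhds.sub h0
  · have h3 : Tendsto (fun T : ℕ => 3 * B / ((T:ℝ) + 1)) atTop (nhds 0) := by
      have := h0.const_mul 3
      simpa [mul_div_assoc] using this
    simpa using tendsto_const_nhds.add h3
  · filter_upwards [eventually_ge_atTop 1] with T hT
    exact (main_bounds κ hκ T hT).1
  · filter_upwards [eventually_ge_atTop 1] with T hT
    exact (main_bounds κ hκ T hT).2
end

section
/- Let g > 0 and 0 ≤ δ < 1/4, and define the plane curve x(θ) = g·(cos θ + δ·cos 2θ), y(θ) = sin θ. Then for every real θ, x'(θ)·y''(θ) − x''(θ)·y'(θ) = g·(1 + 4δ·cos³θ), and this quantity is strictly positive; hence the gibbous curve has nowhere-vanishing signed curvature (it is convex) whenever δ < 1/4. -/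
open Real

theorem gibbous_curve_convex (g δ : ℝ) (hg : g > 0) (hδ0 : 0 ≤ δ) (hδ : δ < 1/4)
    (x y : ℝ → ℝ)
    (hx : ∀ θ : ℝ, x θ = g * (Real.cos θ + δ * Real.cos (2 * θ)))
    (hy : ∀ θ : ℝ, y θ = Real.sin θ) :
    ∀ θ : ℝ,
      deriv x θ * deriv (deriv y) θ - deriv (deriv x) θ * deriv y θ =
          g * (1 + 4 * δ * Real.cos θ ^ 3) ∧
        0 < g * (1 + 4 * δ * Real.cos θ ^ 3) := by
  have hxf : x = fun θ => g * (Real.cos θ + δ * Real.cos (2 * θ)) := funext hx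
  have hyf : y = fun θ => Real.sin θ := funext hy
  subst hxf hyf
  have h2 : ∀ θ : ℝ, HasDerivAt (fun t : ℝ => Real.cos (2 * t)) (-Real.sin (2 * θ) * 2) θ := by
    intro θ
    simpa [Function.comp_def] using (Real.hasDerivAt_cos (2 * θ)).comp θ ((hasDerivAt_id θ).const_mul 2)
  have h2' : ∀ θ : ℝ, HasDerivAt (fun t : ℝ => Real.sin (2 * t)) (Real.cos (2 * θ) * 2) θ := by
    intro θ
    simpa [Function.comp_def] using (Real.hasDerivAt_sin (2 * θ)).comp θ ((hasDerivAt_id θ).const_mul 2)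
  have hdx : deriv (fun θ => g * (Real.cos θ + δ * Real.cos (2 * θ)))
      = fun θ => g * (-Real.sin θ + δ * (-Real.sin (2 * θ) * 2)) := by
    funext θ
    exact (((Real.hasDerivAt_cos θ).add ((h2 θ).const_mul δ)).const_mul g).deriv
  have hdx2 : ∀ θ : ℝ, deriv (deriv (fun θ => g * (Real.cos θ + δ * Real.cos (2 * θ)))) θ
      = g * (-Real.cos θ + δ * (-(Real.cos (2 * θ) * 2) * 2)) := by
    intro θ
    rw [hdx]
    have : HasDerivAt (fun t => g * (-Real.sin t + δ * (-Real.sin (2 * t) * 2)))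
        (g * (-Real.cos θ + δ * (-(Real.cos (2 * θ) * 2) * 2))) θ := by
      exact (((Real.hasDerivAt_sin θ).neg.add (((h2' θ).neg.mul_const 2).const_mul δ)).const_mul g)
    exact this.deriv
  have hdy : deriv (fun θ : ℝ => Real.sin θ) = fun θ => Real.cos θ := by
    funext θ; exact (Real.hasDerivAt_sin θ).deriv
  have hdy2 : ∀ θ : ℝ, deriv (deriv (fun θ : ℝ => Real.sin θ)) θ = -Real.sin θ := by
    intro θ; rw [hdy]; exact (Real.hasDerivAt_cos θ).deriv
  intro θ
  constructor
  · rw [hdx2 θ, hdy2 θ, hdx, hdy]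
    have hs := Real.sin_sq_add_cos_sq θ
    simp only [Real.cos_two_mul, Real.sin_two_mul]
    linear_combination (g + 4 * g * δ * Real.cos θ) * hs
  · have h1 : -1 ≤ Real.cos θ := Real.neg_one_le_cos θ
    have h2c : Real.cos θ ≤ 1 := Real.cos_le_one θ
    have hc3 : -1 ≤ Real.cos θ ^ 3 := by
      nlinarith [mul_nonneg (by linarith : (0:ℝ) ≤ Real.cos θ + 1)
        (by nlinarith [sq_nonneg (Real.cos θ - 1)] : (0:ℝ) ≤ Real.cos θ ^ 2 - Real.cos θ + 1)]
    have : (0:ℝ) < 1 + 4 * δ * Real.cos θ ^ 3 := by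
      nlinarith [mul_le_mul_of_nonneg_left hc3 hδ0]
    positivity
end

section
/- For every real r ≥ 2, r·sin(π/(πr − 1)) > 1. -/
open Real

theorem tall_cylinder_no_overlap (r : ℝ) (hr : 2 ≤ r) :
    r * Real.sin (Real.pi / (Real.pi * r - 1)) > 1 := by
  have hpi := Real.pi_gt_three
  have hpi2 := Real.pi_lt_d2
  have hs0 : 0 < Real.pi * r - 1 := by nlinarith
  set x := Real.pi / (Real.pi * r - 1) with hx
  have hx0 : 0 < x := div_pos Real.pi_pos hs0
  have hx1 : x ≤ 1 := by
    rw [hx, div_le_one hs0]; nlinarith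
  have hsin : x - x ^ 3 / 4 < Real.sin x := by
    have := Real.sin_gt_sub_cube hx0; nlinarith [pow_pos hx0 3]
  have hr0 : (0:ℝ) < r := by linarith
  have hp2 : Real.pi ^ 2 ≤ 9.9225 := by
    nlinarith [mul_lt_mul_of_pos_left hpi2 Real.pi_pos]
  have hp3 : Real.pi ^ 3 ≤ 31.26 := by
    nlinarith [mul_le_mul_of_nonneg_right hp2 Real.pi_pos.le]
  have h9 : (9:ℝ) ≤ Real.pi ^ 2 := by nlinarith
  have hp9 : 9 * r ^ 2 ≤ Real.pi ^ 2 * r ^ 2 :=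
    mul_le_mul_of_nonneg_right h9 (sq_nonneg r)
  have h4 : Real.pi ^ 3 * r ≤ 4 * (Real.pi * r - 1) ^ 2 := by
    nlinarith [sq_nonneg (r - 2), hp9, mul_le_mul_of_nonneg_right hp3 hr0.le]
  have hid : r * (x - x ^ 3 / 4) - 1 =
      (4 * (Real.pi * r - 1) ^ 2 - Real.pi ^ 3 * r) / (4 * (Real.pi * r - 1) ^ 3) := by
    rw [hx]
    generalize hs : Real.pi * r - 1 = s
    have hne : s ≠ 0 := by rw [← hs]; exact hs0.ne'
    field_simp
    linear_combination (4 * s ^ 2) * hs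
  have key : r * (x - x ^ 3 / 4) ≥ 1 := by
    have hnum : 0 ≤ 4 * (Real.pi * r - 1) ^ 2 - Real.pi ^ 3 * r := by linarith
    have hden : 0 < 4 * (Real.pi * r - 1) ^ 3 := by positivity
    nlinarith [div_nonneg hnum (le_of_lt hden)]
  nlinarith [hsin, key, hr0]
end

section
/- For every real r ≥ 2, r − 1/arcsin(1/r) ≤ 2 − 6/π, with equality when r = 2; equivalently, π·(r − (arcsin(1/r))⁻¹) ≤ 2π − 6 for all r ≥ 2. -/
open Real

theorem key_ineq (θ : ℝ) (h0 : 0 < θ) (h1 : θ < π/6) : θ^2 * Real.cos θ < (Real.sin θ)^2 := by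
  have hle1 : θ ≤ 1 := by linarith [Real.pi_lt_d2]
  have s1 : θ - θ^3/4 < Real.sin θ := by have := Real.sin_gt_sub_cube h0; linarith [pow_pos h0 3]
  have s2 : θ/2 - (θ/2)^3/4 < Real.sin (θ/2) := by have := Real.sin_gt_sub_cube (x := θ/2) (by linarith); linarith [pow_pos (half_pos h0) 3]
  have hc : Real.cos θ = 1 - 2 * Real.sin (θ/2)^2 := by
    have h2 := Real.cos_two_mul' (θ/2)
    rw [show 2 * (θ/2) = θ by ring] at h2
    nlinarith [Real.sin_sq_add_cos_sq (θ/2)]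
  have hp1 : 0 < θ - θ^3/4 := by nlinarith [mul_pos h0 h0, sq_nonneg (1-θ)]
  have hp2 : 0 < θ/2 - (θ/2)^3/4 := by nlinarith [mul_pos h0 h0, sq_nonneg (1-θ)]
  have A : (θ - θ^3/4)^2 < Real.sin θ ^2 := by
    apply pow_lt_pow_left₀ s1 hp1.le
    norm_num
  have B : (θ/2 - (θ/2)^3/4)^2 < Real.sin (θ/2) ^2 := by
    apply pow_lt_pow_left₀ s2 hp2.le
    norm_num
  have B2 := mul_lt_mul_of_pos_left B (show (0:ℝ) < θ^2 by positivity)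
  nlinarith [A, B2, sq_nonneg (θ^2*θ^2)]

theorem F_mono : StrictMonoOn (fun θ : ℝ => 1 / Real.sin θ - 1 / θ) (Set.Ioc 0 (π/6)) := by
  have hconv : Convex ℝ (Set.Ioc (0:ℝ) (π/6)) := convex_Ioc _ _
  have hsinpos : ∀ x ∈ Set.Ioc (0:ℝ) (π/6), 0 < Real.sin x := by
    intro x hx
    apply Real.sin_pos_of_pos_of_lt_pi hx.1
    have := Real.pi_gt_three
    linarith [hx.2]
  apply strictMonoOn_of_deriv_pos hconv
  · apply ContinuousOn.sub
    · exact ContinuousOn.div continuousOn_const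
        (Real.continuous_sin.continuousOn) (fun x hx => (hsinpos x hx).ne')
    · exact ContinuousOn.div continuousOn_const continuousOn_id (fun x hx => hx.1.ne')
  · intro x hx
    rw [interior_Ioc] at hx
    have hx0 : 0 < x := hx.1
    have hsp : 0 < Real.sin x := hsinpos x ⟨hx.1, hx.2.le⟩
    have hd1 : HasDerivAt (fun θ : ℝ => (Real.sin θ)⁻¹) (-Real.cos x / (Real.sin x)^2) x :=
      (Real.hasDerivAt_sin x).inv hsp.ne'
    have hd2 : HasDerivAt (fun θ : ℝ => θ⁻¹) (-1 / x^2) x := by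
      have := hasDerivAt_inv hx0.ne'
      rw [show (-1 / x^2 : ℝ) = -(x^2)⁻¹ by ring]
      exact this
    have hd : HasDerivAt (fun θ : ℝ => 1 / Real.sin θ - 1 / θ)
        (-Real.cos x / (Real.sin x)^2 - -1 / x^2) x := by
      have := hd1.sub hd2; simp only [one_div]; exact this
    rw [hd.deriv]
    have hk := key_ineq x hx0 hx.2
    rw [div_sub_div _ _ (by positivity : (Real.sin x)^2 ≠ 0) (by positivity : x^2 ≠ 0)]
    apply div_pos
    · nlinarith
    · positivity

theorem F_le (θ : ℝ) (h0 : 0 < θ) (h1 : θ ≤ π/6) :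
    1 / Real.sin θ - 1 / θ ≤ 2 - 6 / π := by
  have hpi : 0 < π := Real.pi_pos
  have hval : 1 / Real.sin (π/6) - 1 / (π/6) = 2 - 6 / π := by
    rw [Real.sin_pi_div_six]
    field_simp
  rcases eq_or_lt_of_le h1 with h | h
  · rw [h, hval]
  · have := F_mono (Set.mem_Ioc.2 ⟨h0, h1⟩) (Set.mem_Ioc.2 ⟨by linarith, le_refl _⟩) h
    simp only at this
    linarith [hval ▸ this]

theorem epsilon_correction_bound :
    (∀ r : ℝ, 2 ≤ r → r - 1 / Real.arcsin (1 / r) ≤ 2 - 6 / Real.pi) ∧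
      (2 : ℝ) - 1 / Real.arcsin (1 / 2) = 2 - 6 / Real.pi := by
  have harc2 : Real.arcsin (1/2 : ℝ) = π/6 := by
    rw [show (1:ℝ)/2 = Real.sin (π/6) by rw [Real.sin_pi_div_six]]
    exact Real.arcsin_sin (by linarith [Real.pi_pos]) (by linarith [Real.pi_pos])
  constructor
  · intro r hr
    have hr0 : 0 < r := by linarith
    have hinv : (0:ℝ) < 1/r := by positivity
    have hinv2 : 1/r ≤ 1/2 := by
      rw [div_le_div_iff₀ hr0 (by norm_num)]
      linarith
    set θ := Real.arcsin (1/r) with hθ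
    have hθ0 : 0 < θ := Real.arcsin_pos.2 hinv
    have hθle : θ ≤ π/6 := by
      rw [hθ, ← harc2]
      exact Real.monotone_arcsin hinv2
    have hsin : Real.sin θ = 1/r := Real.sin_arcsin (by linarith) (by linarith)
    have := F_le θ hθ0 hθle
    rw [hsin] at this
    rw [one_div_one_div] at this
    linarith
  · rw [harc2]
    rw [show 1 / (π/6) = 6/π by field_simp]
end

section
/- Fix a real r ≥ 2. For h > 0 let N(h) = πhr/√(h² + r²) − 1, and let m(h) = inf over θ ∈ [−π, π] of [2r²·(1 − cos(θ + 2π/N(h))) + h²θ²]. Then lim_{h → ∞} m(h) = 4r²·sin²(π/(πr − 1)). -/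
open Real Filter

theorem key_ineq_s18 (r h a θ : ℝ) (hh : 0 < h) :
    2*r^2*(1 - Real.cos a) - r^4/h^2 ≤ 2*r^2*(1 - Real.cos (θ + a)) + h^2*θ^2 := by
  have h1 : Real.cos (θ+a) - Real.cos a ≤ |θ| := by
    have e := Real.cos_sub_cos (θ+a) a
    have hs1 : |Real.sin ((θ+a+a)/2)| ≤ 1 := Real.abs_sin_le_one _
    have hs2 : |Real.sin ((θ+a-a)/2)| ≤ |(θ+a-a)/2| := Real.abs_sin_le_abs
    have habs : |Real.cos (θ+a) - Real.cos a| ≤ |θ| := by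
      rw [e]
      have h0 : |(-2) * Real.sin ((θ+a+a)/2) * Real.sin ((θ+a-a)/2)|
          = 2 * |Real.sin ((θ+a+a)/2)| * |Real.sin ((θ+a-a)/2)| := by
        rw [abs_mul, abs_mul]; norm_num
      rw [h0]
      have h2 : |(θ+a-a)/2| = |θ|/2 := by
        rw [show θ+a-a = θ by ring, abs_div, abs_two]
      rw [h2] at hs2
      nlinarith [abs_nonneg (Real.sin ((θ+a-a)/2)), abs_nonneg θ,
        abs_nonneg (Real.sin ((θ+a+a)/2))]
    exact le_of_abs_le habs
  have h2 : 2*r^2*(Real.cos (θ+a) - Real.cos a) ≤ 2*r^2*|θ| := by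
    nlinarith [sq_nonneg r]
  have h2pos : (0:ℝ) < h^2 := by positivity
  have h3 : 2*r^2*|θ| - h^2*θ^2 ≤ r^4/h^2 := by
    rw [le_div_iff₀ h2pos, ← sq_abs θ]
    nlinarith [sq_nonneg (h^2*|θ| - r^2)]
  linarith

theorem N_lim (r : ℝ) :
    Tendsto (fun h : ℝ => Real.pi * h * r / Real.sqrt (h ^ 2 + r ^ 2) - 1)
      atTop (nhds (Real.pi * r - 1)) := by
  have h1 : Tendsto (fun h : ℝ => r / h) atTop (nhds 0) :=
    tendsto_const_nhds.div_atTop tendsto_id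
  have h2 : Tendsto (fun h : ℝ => Real.sqrt (1 + (r/h)^2)) atTop (nhds 1) := by
    have : Tendsto (fun h : ℝ => 1 + (r/h)^2) atTop (nhds 1) := by
      simpa using tendsto_const_nhds.add ((h1.pow 2))
    have := (Real.continuous_sqrt.tendsto 1).comp this
    rw [Real.sqrt_one] at this; exact this
  have h3 : Tendsto (fun h : ℝ => Real.pi * r / Real.sqrt (1 + (r/h)^2))
      atTop (nhds (Real.pi * r)) := by
    have := (tendsto_const_nhds : Tendsto (fun _ : ℝ => Real.pi * r) atTop (nhds (Real.pi * r))).div h2 one_ne_zero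
    rw [div_one] at this; exact this
  have heq : ∀ᶠ h : ℝ in atTop,
      Real.pi * r / Real.sqrt (1 + (r/h)^2) = Real.pi * h * r / Real.sqrt (h ^ 2 + r ^ 2) := by
    filter_upwards [eventually_gt_atTop 0] with h hh
    have hs : Real.sqrt (h ^ 2 + r ^ 2) = h * Real.sqrt (1 + (r/h)^2) := by
      rw [← Real.sqrt_sq hh.le, ← Real.sqrt_mul (sq_nonneg h)]
      congr 1
      field_simp
      rw [Real.sq_sqrt (sq_nonneg h)]
    rw [hs]
    have hpos : 0 < Real.sqrt (1 + (r/h)^2) := Real.sqrt_pos.2 (by positivity)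
    field_simp
  exact (h3.congr' heq).sub tendsto_const_nhds

theorem reduced_approximation_limit (r : ℝ) (hr : 2 ≤ r) :
    Tendsto
      (fun h : ℝ =>
        sInf ((fun θ : ℝ =>
            2 * r ^ 2 *
                (1 - Real.cos (θ + 2 * Real.pi /
                  (Real.pi * h * r / Real.sqrt (h ^ 2 + r ^ 2) - 1))) +
              h ^ 2 * θ ^ 2) '' Set.Icc (-Real.pi) Real.pi))
      atTop
      (nhds (4 * r ^ 2 * Real.sin (Real.pi / (Real.pi * r - 1)) ^ 2)) := by
  have hπ := Real.pi_gt_three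
  have hden : (0:ℝ) < Real.pi * r - 1 := by nlinarith
  -- limit of a(h) := 2π / N(h)
  have ha : Tendsto (fun h : ℝ => 2 * Real.pi /
      (Real.pi * h * r / Real.sqrt (h ^ 2 + r ^ 2) - 1)) atTop
      (nhds (2 * Real.pi / (Real.pi * r - 1))) :=
    tendsto_const_nhds.div (N_lim r) hden.ne'
  -- L = 2r^2 (1 - cos(2π/(πr-1)))
  have hLeq : 2 * r ^ 2 * (1 - Real.cos (2 * Real.pi / (Real.pi * r - 1)))
      = 4 * r ^ 2 * Real.sin (Real.pi / (Real.pi * r - 1)) ^ 2 := by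
    rw [show 2 * Real.pi / (Real.pi * r - 1) = 2 * (Real.pi / (Real.pi * r - 1)) by ring,
      Real.cos_two_mul, Real.sin_sq]
    ring
  have hU : Tendsto (fun h : ℝ => 2 * r ^ 2 * (1 - Real.cos (2 * Real.pi /
      (Real.pi * h * r / Real.sqrt (h ^ 2 + r ^ 2) - 1)))) atTop
      (nhds (4 * r ^ 2 * Real.sin (Real.pi / (Real.pi * r - 1)) ^ 2)) := by
    rw [← hLeq]
    exact tendsto_const_nhds.mul
      (tendsto_const_nhds.sub ((Real.continuous_cos.tendsto _).comp ha))
  have hz : Tendsto (fun h : ℝ => r ^ 4 / h ^ 2) atTop (nhds 0) :=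
    tendsto_const_nhds.div_atTop (tendsto_pow_atTop two_ne_zero)
  have hLo : Tendsto (fun h : ℝ => 2 * r ^ 2 * (1 - Real.cos (2 * Real.pi /
      (Real.pi * h * r / Real.sqrt (h ^ 2 + r ^ 2) - 1))) - r ^ 4 / h ^ 2) atTop
      (nhds (4 * r ^ 2 * Real.sin (Real.pi / (Real.pi * r - 1)) ^ 2)) := by
    simpa using hU.sub hz
  refine tendsto_of_tendsto_of_tendsto_of_le_of_le' hLo hU ?_ ?_
  · filter_upwards [eventually_gt_atTop 0] with h hh
    refine le_csInf ?_ ?_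
    · exact (Set.nonempty_Icc.2 (by linarith [Real.pi_pos])).image _
    · rintro b ⟨θ, hθ, rfl⟩
      exact key_ineq_s18 r h _ θ hh
  · filter_upwards [eventually_gt_atTop 0] with h hh
    have hbdd : BddBelow ((fun θ : ℝ =>
        2 * r ^ 2 * (1 - Real.cos (θ + 2 * Real.pi /
          (Real.pi * h * r / Real.sqrt (h ^ 2 + r ^ 2) - 1))) +
        h ^ 2 * θ ^ 2) '' Set.Icc (-Real.pi) Real.pi) := by
      refine ⟨2 * r ^ 2 * (1 - Real.cos (2 * Real.pi /
        (Real.pi * h * r / Real.sqrt (h ^ 2 + r ^ 2) - 1))) - r ^ 4 / h ^ 2, ?_⟩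
      rintro b ⟨θ, hθ, rfl⟩
      exact key_ineq_s18 r h _ θ hh
    have hmem : 2 * r ^ 2 * (1 - Real.cos (2 * Real.pi /
        (Real.pi * h * r / Real.sqrt (h ^ 2 + r ^ 2) - 1))) ∈
        ((fun θ : ℝ =>
          2 * r ^ 2 * (1 - Real.cos (θ + 2 * Real.pi /
            (Real.pi * h * r / Real.sqrt (h ^ 2 + r ^ 2) - 1))) +
          h ^ 2 * θ ^ 2) '' Set.Icc (-Real.pi) Real.pi) := by
      refine ⟨0, ?_, by norm_num⟩
      constructor <;> linarith [Real.pi_pos]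
    exact csInf_le hbdd hmem
end

section
/- Fix a real r ≥ 2. For h > 0 let N_a(h) = πhr/√(h² + r²), and let m(h) = inf over θ ∈ [−π, π] of [2r²·(1 − cos(θ + 2π/N_a(h))) + h²θ²]. Then lim_{h → ∞} m(h) = 4r²·sin²(1/r), and 4r²·sin²(1/r) < 4; hence using the unreduced rectangular approximation N_a violates the unit-thickness no-overlap constraint in the tall-cylinder limit. -/
open Real Filter


lemma cos_add_le_abs_aux (a t : ℝ) : Real.cos (t + a) ≤ Real.cos a + |t| := by
  have e := Real.cos_sub_cos (t + a) a
  set s1 := Real.sin ((t + a + a) / 2) with hs1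
  set s2 := Real.sin ((t + a - a) / 2) with hs2
  have h1 : |s1| ≤ 1 := by
    rw [abs_le]; exact ⟨Real.neg_one_le_sin _, Real.sin_le_one _⟩
  have h2 : |s2| ≤ |t| / 2 := by
    calc |s2| ≤ |(t + a - a) / 2| := Real.abs_sin_le_abs
      _ = |t| / 2 := by rw [add_sub_cancel_right, abs_div]; norm_num
  have hm : -(s1 * s2) ≤ |s1| * |s2| := by rw [← abs_mul]; exact neg_le_abs _
  have hmm : |s1| * |s2| ≤ 1 * (|t| / 2) := mul_le_mul h1 h2 (abs_nonneg _) zero_le_one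
  linarith [e]

theorem unreduced_approximation_violates (r : ℝ) (hr : 2 ≤ r) :
    Tendsto
        (fun h : ℝ =>
          sInf ((fun θ : ℝ =>
              2 * r ^ 2 *
                  (1 - Real.cos (θ + 2 * Real.pi /
                    (Real.pi * h * r / Real.sqrt (h ^ 2 + r ^ 2)))) +
                h ^ 2 * θ ^ 2) '' Set.Icc (-Real.pi) Real.pi))
        atTop
        (nhds (4 * r ^ 2 * Real.sin (1 / r) ^ 2)) ∧
      4 * r ^ 2 * Real.sin (1 / r) ^ 2 < 4 := by
  have hr0 : (0:ℝ) < r := by linarith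
  set c : ℝ → ℝ := fun h => 2 * Real.pi / (Real.pi * h * r / Real.sqrt (h ^ 2 + r ^ 2))
    with hc
  -- simplification of c for positive h
  have hceq : ∀ h : ℝ, 0 < h → c h = 2 / r * (Real.sqrt (h ^ 2 + r ^ 2) / h) := by
    intro h hh
    have hs : (0:ℝ) < Real.sqrt (h ^ 2 + r ^ 2) := Real.sqrt_pos.2 (by positivity)
    rw [hc]
    field_simp
  -- sqrt(h²+r²)/h → 1
  have hg : Tendsto (fun h : ℝ => Real.sqrt (h ^ 2 + r ^ 2) / h) atTop (nhds 1) := by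
    have hupper : Tendsto (fun h : ℝ => 1 + r / h) atTop (nhds (1 + 0)) :=
      tendsto_const_nhds.add (tendsto_const_nhds.div_atTop tendsto_id)
    rw [add_zero] at hupper
    refine tendsto_of_tendsto_of_tendsto_of_le_of_le' tendsto_const_nhds hupper ?_ ?_
    · filter_upwards [eventually_gt_atTop (0:ℝ)] with h hh
      have h1 : h ≤ Real.sqrt (h ^ 2 + r ^ 2) := by
        have := Real.sqrt_le_sqrt (show h ^ 2 ≤ h ^ 2 + r ^ 2 by nlinarith)
        rwa [Real.sqrt_sq hh.le] at this
      exact (one_le_div hh).2 h1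
    · filter_upwards [eventually_gt_atTop (0:ℝ)] with h hh
      have h1 : Real.sqrt (h ^ 2 + r ^ 2) ≤ h + r := by
        have := Real.sqrt_le_sqrt (show h ^ 2 + r ^ 2 ≤ (h + r) ^ 2 by nlinarith)
        rwa [Real.sqrt_sq (by positivity)] at this
      calc Real.sqrt (h ^ 2 + r ^ 2) / h ≤ (h + r) / h := by gcongr
        _ = 1 + r / h := by field_simp
  -- c → 2/r
  have hctend : Tendsto c atTop (nhds (2 / r)) := by
    have : Tendsto (fun h : ℝ => 2 / r * (Real.sqrt (h ^ 2 + r ^ 2) / h)) atTop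
        (nhds (2 / r * 1)) := tendsto_const_nhds.mul hg
    rw [mul_one] at this
    refine this.congr' ?_
    filter_upwards [eventually_gt_atTop (0:ℝ)] with h hh
    exact (hceq h hh).symm
  -- the limit identity
  have hid : 2 * r ^ 2 * (1 - Real.cos (2 / r)) = 4 * r ^ 2 * Real.sin (1 / r) ^ 2 := by
    have h1 := Real.cos_two_mul (1 / r)
    have h2 := Real.sin_sq_add_cos_sq (1 / r)
    rw [show (2:ℝ) / r = 2 * (1 / r) by ring]
    nlinarith [h1, h2]
  -- L tends to the limit
  set L : ℝ → ℝ := fun h => 2 * r ^ 2 * (1 - Real.cos (c h)) with hLdef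
  have hLtend : Tendsto L atTop (nhds (4 * r ^ 2 * Real.sin (1 / r) ^ 2)) := by
    rw [← hid]
    exact (tendsto_const_nhds.mul (tendsto_const_nhds.sub
      (Real.continuous_cos.continuousAt.tendsto.comp hctend)))
  have hr4 : Tendsto (fun h : ℝ => r ^ 4 / h ^ 2) atTop (nhds 0) :=
    tendsto_const_nhds.div_atTop ((tendsto_pow_atTop (two_ne_zero)).comp tendsto_id)
  constructor
  · refine tendsto_of_tendsto_of_tendsto_of_le_of_le'
      (g := fun h => L h - r ^ 4 / h ^ 2) (h := L) ?_ hLtend ?_ ?_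
    · have := hLtend.sub hr4
      rwa [sub_zero] at this
    · -- lower bound for sInf
      filter_upwards [eventually_gt_atTop (0:ℝ)] with h hh
      refine le_csInf ⟨_, Set.mem_image_of_mem _ (Set.mem_Icc.2
        ⟨neg_nonpos.2 Real.pi_pos.le, Real.pi_pos.le⟩ : (0:ℝ) ∈ Set.Icc (-Real.pi) Real.pi)⟩ ?_
      rintro x ⟨θ, _, rfl⟩
      -- pointwise lower bound
      have key1 : Real.cos (θ + c h) ≤ Real.cos (c h) + |θ| :=
        cos_add_le_abs_aux (c h) θ
      have key1' : 2 * r ^ 2 * Real.cos (θ + c h) ≤ 2 * r ^ 2 * (Real.cos (c h) + |θ|) :=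
        mul_le_mul_of_nonneg_left key1 (by positivity)
      have key2 : 2 * r ^ 2 * |θ| ≤ h ^ 2 * θ ^ 2 + r ^ 4 / h ^ 2 := by
        have h2 := two_mul_le_add_sq (h * |θ|) (r ^ 2 / h)
        have e1 : 2 * (h * |θ|) * (r ^ 2 / h) = 2 * r ^ 2 * |θ| := by
          field_simp
        have e2 : (h * |θ|) ^ 2 = h ^ 2 * θ ^ 2 := by
          rw [mul_pow, sq_abs]
        have e3 : (r ^ 2 / h) ^ 2 = r ^ 4 / h ^ 2 := by
          rw [div_pow]; ring_nf
        rw [e1, e2, e3] at h2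
        exact h2
      have hch : 2 * Real.pi / (Real.pi * h * r / Real.sqrt (h ^ 2 + r ^ 2)) = c h := rfl
      simp only [hLdef, hch]
      linarith [key1', key2]
    · -- upper bound: sInf ≤ L h
      filter_upwards [eventually_gt_atTop (0:ℝ)] with h hh
      have hmem : L h ∈ ((fun θ : ℝ =>
          2 * r ^ 2 * (1 - Real.cos (θ + c h)) + h ^ 2 * θ ^ 2) ''
            Set.Icc (-Real.pi) Real.pi) := by
        refine ⟨0, Set.mem_Icc.2 ⟨neg_nonpos.2 Real.pi_pos.le, Real.pi_pos.le⟩, ?_⟩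
        simp [hLdef]
      refine csInf_le ?_ hmem
      -- bounded below
      refine ⟨L h - r ^ 4 / h ^ 2, ?_⟩
      rintro x ⟨θ, _, rfl⟩
      have key1 : Real.cos (θ + c h) ≤ Real.cos (c h) + |θ| :=
        cos_add_le_abs_aux (c h) θ
      have key1' : 2 * r ^ 2 * Real.cos (θ + c h) ≤ 2 * r ^ 2 * (Real.cos (c h) + |θ|) :=
        mul_le_mul_of_nonneg_left key1 (by positivity)
      have key2 : 2 * r ^ 2 * |θ| ≤ h ^ 2 * θ ^ 2 + r ^ 4 / h ^ 2 := by
        have h2 := two_mul_le_add_sq (h * |θ|) (r ^ 2 / h)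
        have e1 : 2 * (h * |θ|) * (r ^ 2 / h) = 2 * r ^ 2 * |θ| := by
          field_simp
        have e2 : (h * |θ|) ^ 2 = h ^ 2 * θ ^ 2 := by
          rw [mul_pow, sq_abs]
        have e3 : (r ^ 2 / h) ^ 2 = r ^ 4 / h ^ 2 := by
          rw [div_pow]; ring_nf
        rw [e1, e2, e3] at h2
        exact h2
      have hch : 2 * Real.pi / (Real.pi * h * r / Real.sqrt (h ^ 2 + r ^ 2)) = c h := rfl
      simp only [hLdef, hch]
      linarith [key1', key2]
  · -- 4 r² sin²(1/r) < 4
    have hs : Real.sin (1 / r) < 1 / r := Real.sin_lt (by positivity)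
    have hsp : 0 < Real.sin (1 / r) := by
      apply Real.sin_pos_of_pos_of_lt_pi (by positivity)
      have : 1 / r ≤ 1 / 2 := by
        apply div_le_div_of_nonneg_left (by norm_num) (by norm_num) hr
      linarith [Real.pi_gt_three]
    have h1 : r * Real.sin (1 / r) < 1 := by
      have := mul_lt_mul_of_pos_left hs hr0
      rwa [mul_one_div, div_self hr0.ne'] at this
    nlinarith [h1, mul_pos hr0 hsp]
end
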